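/- arXiv:2207.03445 — 4 statements merged into one kernel-verified Lean document; each statement's English description precedes it below -/
import Mathlib

section
/- There exists a universal constant B ≥ 1 such that for every integer d ≥ 1 and every nonempty finite set A of vectors in the closed Euclidean unit ball of ℝ^d whose ℝ-linear span is all of ℝ^d, there exist a subset C ⊆ A of cardinality at most B·d whose span is all of ℝ^d, and a function π : C → [0,1] with Σ_{α∈C} π(α) = 1, such that the d×d matrix V(π) = Σ_{α∈C} π(α)·α αᵀ is invertible and for every a ∈ A one has aᵀ V(π)⁻¹ a ≤ 2d. -/
/-!
Among the subsets of `A` of size `k = min |A| (2d)` pick one, `C`, maximising `det M` for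
`M = ∑_{α ∈ C} α αᵀ` (a discrete D-optimal design); some `k`-subset spans, so `M` is positive
definite. Every `a ∈ A` then has leverage `aᵀ M⁻¹ a ≤ 1`. For `a ∈ C` this is `M ≥ a aᵀ`.
For `a ∉ C` we have `|C| = 2d`, and the leverages over `C` sum to `tr (M⁻¹ M) = d`, so some
`α ∈ C` has leverage `v ≤ 1/2`. By the matrix determinant lemma, exchanging `α` for `a`
multiplies `det M` by `(1 - v) (1 + aᵀ N⁻¹ a)` with `N = M - α αᵀ`; maximality bounds this by `1`,
so `aᵀ M⁻¹ a ≤ aᵀ N⁻¹ a ≤ v / (1 - v) ≤ 1`. The uniform distribution on `C` has `V = M / |C|`,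
whence `aᵀ V⁻¹ a ≤ |C| ≤ 2d`.
-/

open Matrix Finset

namespace Matrix

variable {m R : Type*} [Fintype m] [DecidableEq m] [CommRing R]

theorem det_add_vecMulVec {A : Matrix m m R} (hA : IsUnit A.det) (u v : m → R) :
    (A + vecMulVec u v).det = A.det * (1 + v ⬝ᵥ A⁻¹ *ᵥ u) := by
  rw [vecMulVec_eq Unit, det_add_replicateCol_mul_replicateRow hA, Matrix.mul_assoc,
    ← replicateCol_mulVec, det_unique (1 + _), add_apply, one_apply_eq,
    replicateRow_mul_replicateCol_apply]

theorem det_sub_vecMulVec {A : Matrix m m R} (hA : IsUnit A.det) (u v : m → R) :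
    (A - vecMulVec u v).det = A.det * (1 - v ⬝ᵥ A⁻¹ *ᵥ u) := by
  rw [sub_eq_add_neg, ← neg_vecMulVec, det_add_vecMulVec hA, mulVec_neg, dotProduct_neg,
    ← sub_eq_add_neg]

variable {n : Type*} [Fintype n] [DecidableEq n]

theorem PosDef.dotProduct_inv_mulVec_le_one {M : Matrix n n ℝ} (hM : M.PosDef) {a : n → ℝ}
    (h : (M - vecMulVec a a).PosSemidef) : a ⬝ᵥ M⁻¹ *ᵥ a ≤ 1 := by
  have hdet := h.det_nonneg
  rw [det_sub_vecMulVec hM.det_pos.ne'.isUnit, mul_nonneg_iff_of_pos_left hM.det_pos] at hdet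
  linarith

theorem PosDef.dotProduct_inv_mulVec_le_of_posSemidef_sub {M N : Matrix n n ℝ} (hN : N.PosDef)
    (hNM : (M - N).PosSemidef) (a : n → ℝ) : a ⬝ᵥ M⁻¹ *ᵥ a ≤ a ⬝ᵥ N⁻¹ *ᵥ a := by
  have hM : M.PosDef := by simpa using hN.add_posSemidef hNM
  set x := M⁻¹ *ᵥ a
  set y := N⁻¹ *ᵥ a
  have hx : M *ᵥ x = a := by simp [x, mul_nonsing_inv _ hM.det_pos.ne'.isUnit]
  have hy : N *ᵥ y = a := by simp [y, mul_nonsing_inv _ hN.det_pos.ne'.isUnit]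
  have hyNx : y ⬝ᵥ N *ᵥ x = a ⬝ᵥ x := by
    have hNt : Nᵀ = N := conjTranspose_eq_transpose_of_trivial N ▸ hN.isHermitian
    rw [dotProduct_mulVec, ← hNt, vecMul_transpose, hy]
  -- `0 ≤ (x - y)ᵀ N (x - y)` and `xᵀ N x ≤ xᵀ M x` add up to `aᵀ x ≤ aᵀ y`.
  have h₁ := hN.posSemidef.dotProduct_mulVec_nonneg (x - y)
  have h₂ := hNM.dotProduct_mulVec_nonneg x
  simp only [star_trivial, sub_mulVec, mulVec_sub, dotProduct_sub, sub_dotProduct, hx, hy,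
    hyNx, dotProduct_comm x a, dotProduct_comm y a] at h₁ h₂
  linarith

end Matrix

theorem Submodule.span_eq_top_iff_forall_inner_eq_zero {𝕜 E : Type*} [RCLike 𝕜]
    [NormedAddCommGroup E] [InnerProductSpace 𝕜 E] [FiniteDimensional 𝕜 E] (s : Set E) :
    span 𝕜 s = ⊤ ↔ ∀ x, (∀ u ∈ s, inner 𝕜 x u = 0) → x = 0 := by
  rw [← orthogonal_eq_bot_iff, Submodule.eq_bot_iff]
  refine forall_congr' fun x => imp_congr_left ?_
  rw [← span_singleton_le_iff_mem, ← isOrtho_iff_le, isOrtho_span]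
  simp

theorem Finset.exists_subset_card_eq_span_eq_top {K V : Type*} [DivisionRing K] [AddCommGroup V]
    [Module K V] [FiniteDimensional K V] {A : Finset V} (hA : Submodule.span K (A : Set V) = ⊤)
    {k : ℕ} (hk : Module.finrank K V ≤ k) (hkA : k ≤ #A) :
    ∃ C ⊆ A, #C = k ∧ Submodule.span K (C : Set V) = ⊤ := by
  obtain ⟨b, hbA, hbspan, hbind⟩ := exists_linearIndependent K (A : Set V)
  lift b to Finset V using A.finite_toSet.subset hbA
  obtain ⟨C, hbC, hCA, hC⟩ := exists_subsuperset_card_eq (coe_subset.1 hbA)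
    (hbind.finset_card_le_finrank.trans hk) hkA
  refine ⟨C, hCA, hC, eq_top_iff.2 ?_⟩
  rw [← hA, ← hbspan]
  exact Submodule.span_mono (coe_subset.2 hbC)

namespace ExperimentalDesign

variable {n : Type*} [Fintype n]

noncomputable def designMatrix (C : Finset (EuclideanSpace ℝ n)) : Matrix n n ℝ :=
  ∑ α ∈ C, vecMulVec (α : n → ℝ) α

theorem dotProduct_designMatrix_mulVec (C : Finset (EuclideanSpace ℝ n)) (x : n → ℝ) :
    x ⬝ᵥ designMatrix C *ᵥ x = ∑ α ∈ C, ((α : n → ℝ) ⬝ᵥ x) ^ 2 := by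
  rw [designMatrix, sum_mulVec, dotProduct_sum]
  refine sum_congr rfl fun α _ => ?_
  simp [vecMulVec_mulVec, sq, dotProduct_comm x]

theorem posSemidef_designMatrix (C : Finset (EuclideanSpace ℝ n)) :
    (designMatrix C).PosSemidef :=
  posSemidef_sum C fun α _ => by simpa using posSemidef_vecMulVec_self_star (α : n → ℝ)

theorem designMatrix_posDef_iff {C : Finset (EuclideanSpace ℝ n)} :
    (designMatrix C).PosDef ↔ Submodule.span ℝ (C : Set (EuclideanSpace ℝ n)) = ⊤ := by
  have hinner (x α : EuclideanSpace ℝ n) : inner ℝ x α = (α : n → ℝ) ⬝ᵥ x := by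
    simp [EuclideanSpace.inner_eq_star_dotProduct, dotProduct_comm]
  rw [Submodule.span_eq_top_iff_forall_inner_eq_zero]
  constructor
  · intro h x hx
    by_contra hne
    have hpos := h.dotProduct_mulVec_pos (x := (x : n → ℝ)) (by simpa using hne)
    rw [star_trivial, dotProduct_designMatrix_mulVec,
      sum_eq_zero fun α hα => by rw [← hinner, hx α hα, sq, mul_zero]] at hpos
    exact hpos.false
  · intro h
    refine PosDef.of_dotProduct_mulVec_pos (posSemidef_designMatrix C).isHermitian fun x hx => ?_
    rw [star_trivial, dotProduct_designMatrix_mulVec]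
    refine sum_pos' (fun α _ => sq_nonneg _) ?_
    by_contra! hall
    refine hx (congrArg WithLp.ofLp (h (WithLp.toLp 2 x) fun α hα => ?_))
    rw [hinner]
    simpa using hall α hα

theorem designMatrix_erase {C : Finset (EuclideanSpace ℝ n)} {a : EuclideanSpace ℝ n}
    (ha : a ∈ C) : designMatrix (C.erase a) = designMatrix C - vecMulVec (a : n → ℝ) a :=
  eq_sub_of_add_eq (sum_erase_add _ _ ha)

theorem designMatrix_insert {C : Finset (EuclideanSpace ℝ n)} {a : EuclideanSpace ℝ n}
    (ha : a ∉ C) : designMatrix (insert a C) = designMatrix C + vecMulVec (a : n → ℝ) a := by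
  rw [designMatrix, sum_insert ha, add_comm, designMatrix]

variable [DecidableEq n]

noncomputable def leverage (C : Finset (EuclideanSpace ℝ n)) (a : EuclideanSpace ℝ n) : ℝ :=
  (a : n → ℝ) ⬝ᵥ (designMatrix C)⁻¹ *ᵥ a

theorem sum_leverage {C : Finset (EuclideanSpace ℝ n)} (hC : IsUnit (designMatrix C).det) :
    ∑ α ∈ C, leverage C α = Fintype.card n := by
  have htrace (α : EuclideanSpace ℝ n) :
      leverage C α = ((designMatrix C)⁻¹ * vecMulVec (α : n → ℝ) α).trace := by
    rw [leverage, mul_vecMulVec, trace_vecMulVec, dotProduct_comm]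
  rw [sum_congr rfl fun α _ => htrace α, ← trace_sum, ← Finset.mul_sum, ← designMatrix,
    nonsing_inv_mul _ hC, trace_one]

theorem exists_leverage_le {C : Finset (EuclideanSpace ℝ n)} (hCne : C.Nonempty)
    (hC : IsUnit (designMatrix C).det) : ∃ α ∈ C, leverage C α ≤ Fintype.card n / #C := by
  refine exists_le_of_sum_le hCne ?_
  rw [sum_leverage hC, sum_const, nsmul_eq_mul, mul_div_cancel₀]
  exact_mod_cast hCne.card_pos.ne'

theorem leverage_le_one_of_mem {C : Finset (EuclideanSpace ℝ n)} (hC : (designMatrix C).PosDef)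
    {a : EuclideanSpace ℝ n} (ha : a ∈ C) : leverage C a ≤ 1 :=
  hC.dotProduct_inv_mulVec_le_one (designMatrix_erase ha ▸ posSemidef_designMatrix _)

theorem leverage_le_one_of_exchange {C : Finset (EuclideanSpace ℝ n)}
    (hC : (designMatrix C).PosDef) {α a : EuclideanSpace ℝ n} (hα : α ∈ C) (ha : a ∉ C)
    (hαC : leverage C α ≤ 1 / 2)
    (hmax : (designMatrix (insert a (C.erase α))).det ≤ (designMatrix C).det) :
    leverage C a ≤ 1 := by
  set N := designMatrix (C.erase α) with hN_def
  have hdetN : N.det = (designMatrix C).det * (1 - leverage C α) := by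
    rw [hN_def, designMatrix_erase hα, det_sub_vecMulVec hC.det_pos.ne'.isUnit, leverage]
  have hNpos : 0 < N.det := by
    rw [hdetN]
    exact mul_pos hC.det_pos (by linarith)
  have hN : N.PosDef := (posSemidef_designMatrix _).posDef_iff_det_ne_zero.2 hNpos.ne'
  rw [designMatrix_insert (fun h => ha (mem_of_mem_erase h)), det_add_vecMulVec hNpos.ne'.isUnit,
    hdetN, mul_assoc, mul_le_iff_le_one_right hC.det_pos] at hmax
  have hs : (a : n → ℝ) ⬝ᵥ N⁻¹ *ᵥ a ≤ 1 := by nlinarith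
  refine (hN.dotProduct_inv_mulVec_le_of_posSemidef_sub ?_ _).trans hs
  simpa [hN_def, designMatrix_erase hα] using posSemidef_vecMulVec_self_star (α : n → ℝ)

theorem exists_subset_forall_leverage_le_one [Nonempty n] {A : Finset (EuclideanSpace ℝ n)}
    (hA : Submodule.span ℝ (A : Set (EuclideanSpace ℝ n)) = ⊤) :
    ∃ C ⊆ A, #C ≤ 2 * Fintype.card n ∧ C.Nonempty ∧ (designMatrix C).PosDef ∧
      ∀ a ∈ A, leverage C a ≤ 1 := by
  set k := min #A (2 * Fintype.card n)
  have hdimA : Fintype.card n ≤ #A := by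
    have := finrank_span_finset_le_card (R := ℝ) A
    rwa [Set.finrank, hA, finrank_top, finrank_euclideanSpace] at this
  have hk : Fintype.card n ≤ k := le_min hdimA (by omega)
  obtain ⟨C₀, hC₀A, hC₀k, hC₀⟩ := exists_subset_card_eq_span_eq_top hA
    (by rwa [finrank_euclideanSpace]) (min_le_left _ _)
  have hC₀mem : C₀ ∈ A.powersetCard k := mem_powersetCard.2 ⟨hC₀A, hC₀k⟩
  obtain ⟨C, hCmem, hCmax⟩ :=
    exists_max_image (A.powersetCard k) (fun C => (designMatrix C).det) ⟨C₀, hC₀mem⟩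
  obtain ⟨hCA, hCk⟩ := mem_powersetCard.1 hCmem
  have hC : (designMatrix C).PosDef := (posSemidef_designMatrix C).posDef_iff_det_ne_zero.2
    ((designMatrix_posDef_iff.2 hC₀).det_pos.trans_le (hCmax C₀ hC₀mem)).ne'
  have hCne : C.Nonempty := card_pos.1 (hCk ▸ Fintype.card_pos.trans_le hk)
  refine ⟨C, hCA, hCk ▸ min_le_right _ _, hCne, hC, fun a ha => ?_⟩
  by_cases haC : a ∈ C
  · exact leverage_le_one_of_mem hC haC
  have hCcard : #C = 2 * Fintype.card n := by
    have := card_lt_card (Finset.ssubset_iff_subset_ne.2 ⟨hCA, fun h => haC (h ▸ ha)⟩)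
    omega
  obtain ⟨α, hα, hαC⟩ := exists_leverage_le hCne hC.det_pos.ne'.isUnit
  refine leverage_le_one_of_exchange hC hα haC ?_ (hCmax _ ?_)
  · refine hαC.trans (le_of_eq ?_)
    rw [hCcard, Nat.cast_mul, Nat.cast_two]
    field_simp
  · refine mem_powersetCard.2 ⟨insert_subset ha ((erase_subset _ _).trans hCA), ?_⟩
    rw [card_insert_of_notMem (fun h => haC (mem_of_mem_erase h)), card_erase_of_mem hα]
    have := hCne.card_pos
    omega

end ExperimentalDesign

open ExperimentalDesign in
/-- **Core set (near-optimal design) for A** (Lemma 2): there is a universal constant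
`B ≥ 1` such that every nonempty finite spanning subset `A` of the closed Euclidean
unit ball of `ℝ^d` admits a subset `C ⊆ A` of size at most `B·d` spanning `ℝ^d`, and a
probability distribution `π` on `C`, such that `V(π) = Σ_{α∈C} π(α)· α αᵀ` is invertible
and `aᵀ V(π)⁻¹ a ≤ 2d` for every `a ∈ A`. -/
theorem core_set_exists :
    ∃ B : ℝ, 1 ≤ B ∧
      ∀ (d : ℕ), 1 ≤ d →
        ∀ A : Finset (EuclideanSpace ℝ (Fin d)),
          A.Nonempty →
          (∀ a ∈ A, ‖a‖ ≤ 1) →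
          Submodule.span ℝ (A : Set (EuclideanSpace ℝ (Fin d))) = ⊤ →
          ∃ C : Finset (EuclideanSpace ℝ (Fin d)), C ⊆ A ∧
            (C.card : ℝ) ≤ B * d ∧
            Submodule.span ℝ (C : Set (EuclideanSpace ℝ (Fin d))) = ⊤ ∧
            ∃ π : EuclideanSpace ℝ (Fin d) → ℝ,
              (∀ α ∈ C, π α ∈ Set.Icc (0 : ℝ) 1) ∧
              (∑ α ∈ C, π α) = 1 ∧
              IsUnit (∑ α ∈ C, π α • vecMulVec (α : Fin d → ℝ) (α : Fin d → ℝ)) ∧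
              ∀ a ∈ A,
                (a : Fin d → ℝ) ⬝ᵥ
                  (∑ α ∈ C, π α • vecMulVec (α : Fin d → ℝ) (α : Fin d → ℝ))⁻¹ *ᵥ
                    (a : Fin d → ℝ) ≤ 2 * d := by
  refine ⟨2, one_le_two, fun d hd A _ _ hA => ?_⟩
  have : Nonempty (Fin d) := ⟨⟨0, hd⟩⟩
  obtain ⟨C, hCA, hCcard, hCne, hC, hlev⟩ := exists_subset_forall_leverage_le_one hA
  have hCpos : (0 : ℝ) < #C := by exact_mod_cast hCne.card_pos
  have hCd : (#C : ℝ) ≤ 2 * d := by exact_mod_cast Fintype.card_fin d ▸ hCcard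
  have hV : ∑ α ∈ C, (fun _ => (#C : ℝ)⁻¹) α • vecMulVec (α : Fin d → ℝ) α =
      (#C : ℝ)⁻¹ • designMatrix C := (smul_sum ..).symm
  have hVinv : ((#C : ℝ)⁻¹ • designMatrix C)⁻¹ = (#C : ℝ) • (designMatrix C)⁻¹ :=
    inv_eq_left_inv (by rw [smul_mul_smul_comm, mul_inv_cancel₀ hCpos.ne', one_smul,
      nonsing_inv_mul _ hC.det_pos.ne'.isUnit])
  refine ⟨C, hCA, hCd, designMatrix_posDef_iff.1 hC, fun _ => (#C : ℝ)⁻¹,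
    fun _ _ => ⟨by positivity, inv_le_one_of_one_le₀ (by exact_mod_cast hCne.card_pos)⟩,
    by simp [hCpos.ne'], hV ▸ (hC.smul (inv_pos.2 hCpos)).isUnit, fun a ha => ?_⟩
  rw [hV, hVinv, smul_mulVec, dotProduct_smul, smul_eq_mul]
  calc (#C : ℝ) * leverage C a ≤ #C := mul_le_of_le_one_right hCpos.le (hlev a ha)
    _ ≤ 2 * d := hCd
end

section
/- Let b, c > 0, let n ≥ 1 be an integer, let l₁,…,lₙ be real constants with |lᵢ| ≤ c for all i, and let z₁,…,zₙ be independent real random variables each distributed according to the Laplace distribution with scale 1/b. Set x̄ = Σ_{i=1}^n lᵢ·zᵢ. Then for every t ≥ 0: if t ≤ n·c/b then P[x̄ ≥ t] ≤ exp(−t²·b²/(8·n·c²)), and for every t ≥ 0 one also has P[x̄ ≥ t] ≤ exp(n/2 − b·t/(2c)). -/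
/-! A `Lap(1/b)` variable has moment generating function `b² / (b² - s²)` for `|s| < b`.
By the Chernoff bound and independence, for `0 ≤ s` with `2sc ≤ b`,
`P[x̄ ≥ t] ≤ e^{-st} ∏ᵢ b² / (b² - s² lᵢ²) ≤ e^{-st} (1 - (sc/b)²)^{-n} ≤ exp(-st + 2n (sc/b)²)`,
the last step by `1/(1 - x) ≤ e^{2x}` on `[0, 1/2]`. The first bound takes
`s = tb²/(4nc²)`, which is admissible exactly when `t ≤ nc/b`; the second takes `s = b/(2c)`. -/

open MeasureTheory ProbabilityTheory

/-- The Laplace distribution on `ℝ` with scale `1/b` (for `b > 0`): the measure with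
density `x ↦ (b/2) * exp (-b * |x|)` with respect to Lebesgue measure. -/
noncomputable def laplaceMeasure (b : ℝ) : Measure ℝ :=
  MeasureTheory.volume.withDensity
    (fun x => ENNReal.ofReal ((b / 2) * Real.exp (-b * |x|)))

open Real Set

noncomputable def laplacePDF (b x : ℝ) : ℝ := b / 2 * exp (-b * |x|)

section LaplaceDensity

variable {b s : ℝ}

lemma laplaceMeasure_eq_withDensity :
    laplaceMeasure b = volume.withDensity (fun x => ENNReal.ofReal (laplacePDF b x)) := rfl

lemma laplacePDF_nonneg (hb : 0 ≤ b) (x : ℝ) : 0 ≤ laplacePDF b x := by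
  unfold laplacePDF; positivity

@[fun_prop]
lemma measurable_laplacePDF : Measurable (laplacePDF b) := by
  unfold laplacePDF; fun_prop

lemma integrable_laplaceMeasure_iff (hb : 0 ≤ b) {g : ℝ → ℝ} :
    Integrable g (laplaceMeasure b) ↔ Integrable (fun x => laplacePDF b x * g x) := by
  rw [laplaceMeasure_eq_withDensity, integrable_withDensity_iff_integrable_smul' (by fun_prop)
    (.of_forall fun _ => ENNReal.ofReal_lt_top)]
  simp only [ENNReal.toReal_ofReal (laplacePDF_nonneg hb _), smul_eq_mul]

lemma integral_laplaceMeasure (hb : 0 ≤ b) (g : ℝ → ℝ) :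
    ∫ x, g x ∂laplaceMeasure b = ∫ x, laplacePDF b x * g x := by
  rw [laplaceMeasure_eq_withDensity, integral_withDensity_eq_integral_toReal_smul (by fun_prop)
    (.of_forall fun _ => ENNReal.ofReal_lt_top)]
  simp only [ENNReal.toReal_ofReal (laplacePDF_nonneg hb _), smul_eq_mul]

lemma laplacePDF_mul_exp_eqOn_Iic :
    EqOn (fun x => laplacePDF b x * exp (s * x)) (fun x => b / 2 * exp ((b + s) * x)) (Iic 0) :=
  fun x hx => by
    simp only [laplacePDF, abs_of_nonpos (mem_Iic.mp hx), mul_assoc, ← exp_add]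
    ring_nf

lemma laplacePDF_mul_exp_eqOn_Ioi :
    EqOn (fun x => laplacePDF b x * exp (s * x)) (fun x => b / 2 * exp ((s - b) * x)) (Ioi 0) :=
  fun x hx => by
    simp only [laplacePDF, abs_of_pos (mem_Ioi.mp hx), mul_assoc, ← exp_add]
    ring_nf

lemma integrable_laplacePDF_mul_exp (hs : |s| < b) :
    Integrable (fun x => laplacePDF b x * exp (s * x)) := by
  obtain ⟨hs₁, hs₂⟩ := abs_lt.mp hs
  rw [← integrableOn_univ, ← Iic_union_Ioi (a := 0), integrableOn_union]
  exact ⟨IntegrableOn.congr_fun ((integrableOn_exp_mul_Iic (by linarith) 0).const_mul _)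
      laplacePDF_mul_exp_eqOn_Iic.symm measurableSet_Iic,
    IntegrableOn.congr_fun ((integrableOn_exp_mul_Ioi (by linarith) 0).const_mul _)
      laplacePDF_mul_exp_eqOn_Ioi.symm measurableSet_Ioi⟩

lemma integral_laplacePDF_mul_exp (hs : |s| < b) :
    ∫ x, laplacePDF b x * exp (s * x) = b ^ 2 / (b ^ 2 - s ^ 2) := by
  obtain ⟨hs₁, hs₂⟩ := abs_lt.mp hs
  have hint := integrable_laplacePDF_mul_exp hs
  rw [← intervalIntegral.integral_Iic_add_Ioi hint.integrableOn hint.integrableOn,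
    setIntegral_congr_fun measurableSet_Iic laplacePDF_mul_exp_eqOn_Iic,
    setIntegral_congr_fun measurableSet_Ioi laplacePDF_mul_exp_eqOn_Ioi,
    integral_const_mul, integral_const_mul, integral_exp_mul_Iic (by linarith),
    integral_exp_mul_Ioi (by linarith)]
  simp only [mul_zero, exp_zero]
  have : s - b ≠ 0 := by linarith
  have : b + s ≠ 0 := by linarith
  have : b ^ 2 - s ^ 2 ≠ 0 := by nlinarith
  field_simp
  ring

end LaplaceDensity

lemma inv_one_sub_le_exp_two_mul {x : ℝ} (hx₀ : 0 ≤ x) (hx : x ≤ 1 / 2) :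
    (1 - x)⁻¹ ≤ exp (2 * x) := by
  rw [inv_le_iff_one_le_mul₀' (by linarith)]
  nlinarith [add_one_le_exp (2 * x)]

section WeightedSum

variable {Ω : Type*} [MeasurableSpace Ω] {μ : Measure Ω} {b s : ℝ}

lemma integrable_exp_mul_of_map_eq_laplaceMeasure {X : Ω → ℝ} (hX : AEMeasurable X μ)
    (hlaw : μ.map X = laplaceMeasure b) (hs : |s| < b) :
    Integrable (fun ω => exp (s * X ω)) μ := by
  have := (integrable_laplaceMeasure_iff ((abs_nonneg s).trans hs.le)).mpr
    (integrable_laplacePDF_mul_exp hs)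
  rwa [← hlaw, integrable_map_measure (by fun_prop) hX] at this

lemma mgf_of_map_eq_laplaceMeasure {X : Ω → ℝ} (hX : AEMeasurable X μ)
    (hlaw : μ.map X = laplaceMeasure b) (hs : |s| < b) :
    mgf X μ s = b ^ 2 / (b ^ 2 - s ^ 2) := by
  calc mgf X μ s = ∫ x, exp (s * x) ∂μ.map X :=
      (integral_map hX (f := fun x => exp (s * x)) (by fun_prop)).symm
    _ = b ^ 2 / (b ^ 2 - s ^ 2) := by
      rw [hlaw, integral_laplaceMeasure ((abs_nonneg s).trans hs.le),
        integral_laplacePDF_mul_exp hs]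

variable {ι : Type*} [Fintype ι] {c t : ℝ} {l : ι → ℝ} {z : ι → Ω → ℝ}

theorem measureReal_weighted_sum_ge_le (hl : ∀ i, |l i| ≤ c) (hz_meas : ∀ i, Measurable (z i))
    (hz_indep : iIndepFun z μ) (hz_law : ∀ i, μ.map (z i) = laplaceMeasure b)
    (hs : 0 ≤ s) (hsc : s * c < b) :
    μ.real {ω | t ≤ ∑ i, l i * z i ω} ≤
      exp (-s * t) * (b ^ 2 / (b ^ 2 - s ^ 2 * c ^ 2)) ^ Fintype.card ι := by
  have := hz_indep.isProbabilityMeasure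
  set X : ι → Ω → ℝ := fun i ω => l i * z i ω with hX_def
  have hX_meas (i : ι) : Measurable (X i) := (hz_meas i).const_mul (l i)
  have hX_indep : iIndepFun X μ :=
    hz_indep.comp (fun i x => l i * x) fun i => measurable_const_mul _
  have hls_le (i : ι) : |l i * s| ≤ s * c := by
    rw [abs_mul, abs_of_nonneg hs, mul_comm s]
    exact mul_le_mul_of_nonneg_right (hl i) hs
  have hls (i : ι) : |l i * s| < b := (hls_le i).trans_lt hsc
  have hint (i : ι) : Integrable (fun ω => exp (s * X i ω)) μ := by
    simpa only [hX_def, mul_left_comm s, ← mul_assoc] using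
      integrable_exp_mul_of_map_eq_laplaceMeasure (hz_meas i).aemeasurable (hz_law i) (hls i)
  have hmgf (i : ι) : mgf (X i) μ s ≤ b ^ 2 / (b ^ 2 - s ^ 2 * c ^ 2) := by
    rw [mgf_const_mul, mgf_of_map_eq_laplaceMeasure (hz_meas i).aemeasurable (hz_law i) (hls i)]
    have : (l i * s) ^ 2 ≤ s ^ 2 * c ^ 2 := by
      rw [← sq_abs, ← mul_pow]
      exact pow_le_pow_left₀ (abs_nonneg _) (hls_le i) 2
    have : 0 < b ^ 2 - s ^ 2 * c ^ 2 := by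
      nlinarith [abs_nonneg (l i * s), hls_le i]
    gcongr
  calc μ.real {ω | t ≤ ∑ i, l i * z i ω} = μ.real {ω | t ≤ (∑ i, X i) ω} := by
        simp only [hX_def, Finset.sum_apply]
    _ ≤ exp (-s * t) * mgf (∑ i, X i) μ s :=
        measure_ge_le_exp_mul_mgf t hs (hX_indep.integrable_exp_mul_sum hX_meas fun i _ => hint i)
    _ = exp (-s * t) * ∏ i, mgf (X i) μ s := by rw [hX_indep.mgf_sum hX_meas]
    _ ≤ exp (-s * t) * ∏ _i : ι, b ^ 2 / (b ^ 2 - s ^ 2 * c ^ 2) := by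
        gcongr with i
        exacts [fun i _ => mgf_nonneg, hmgf i]
    _ = _ := by rw [Finset.prod_const, Finset.card_univ]

theorem measure_weighted_sum_ge_le_exp (hb : 0 < b) (hc : 0 ≤ c) (hl : ∀ i, |l i| ≤ c)
    (hz_meas : ∀ i, Measurable (z i)) (hz_indep : iIndepFun z μ)
    (hz_law : ∀ i, μ.map (z i) = laplaceMeasure b) (hs : 0 ≤ s) (hsc : 2 * s * c ≤ b) :
    μ {ω | t ≤ ∑ i, l i * z i ω} ≤
      ENNReal.ofReal (exp (-s * t + 2 * Fintype.card ι * (s * c / b) ^ 2)) := by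
  have := hz_indep.isProbabilityMeasure
  have hq₀ : 0 ≤ s * c / b := by positivity
  have hq : s * c / b ≤ 1 / 2 := by rw [div_le_iff₀ hb]; linarith
  rw [← ofReal_measureReal]
  gcongr
  calc μ.real {ω | t ≤ ∑ i, l i * z i ω}
      ≤ exp (-s * t) * (b ^ 2 / (b ^ 2 - s ^ 2 * c ^ 2)) ^ Fintype.card ι :=
        measureReal_weighted_sum_ge_le hl hz_meas hz_indep hz_law hs (by nlinarith)
    _ = exp (-s * t) * ((1 - (s * c / b) ^ 2)⁻¹) ^ Fintype.card ι := by
        congr 2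
        field_simp
    _ ≤ exp (-s * t) * exp (2 * (s * c / b) ^ 2) ^ Fintype.card ι := by
        have : (s * c / b) ^ 2 ≤ 1 / 4 := by nlinarith
        gcongr
        · exact inv_nonneg.mpr (by linarith)
        · exact inv_one_sub_le_exp_two_mul (by positivity) (by linarith)
    _ = exp (-s * t + 2 * Fintype.card ι * (s * c / b) ^ 2) := by
        rw [← exp_nat_mul, ← exp_add]
        ring_nf

end WeightedSum

theorem laplace_weighted_sum_concentration_general
    {Ω : Type*} [MeasurableSpace Ω] (μ : Measure Ω)
    (b c : ℝ) (hb : 0 < b) (hc : 0 < c)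
    (n : ℕ)
    (l : Fin n → ℝ) (hl : ∀ i, |l i| ≤ c)
    (z : Fin n → Ω → ℝ)
    (hz_meas : ∀ i, Measurable (z i))
    (hz_indep : iIndepFun z μ)
    (hz_law : ∀ i, Measure.map (z i) μ = laplaceMeasure b)
    (t : ℝ) (ht : 0 ≤ t) :
    (t ≤ n * c / b →
        μ {ω | t ≤ ∑ i, l i * z i ω} ≤
          ENNReal.ofReal (Real.exp (-(t ^ 2 * b ^ 2) / (8 * n * c ^ 2)))) ∧
      μ {ω | t ≤ ∑ i, l i * z i ω} ≤
        ENNReal.ofReal (Real.exp (n / 2 - b * t / (2 * c))) := by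
  have chernoff (s : ℝ) (hs : 0 ≤ s) (hsc : 2 * s * c ≤ b) :=
    measure_weighted_sum_ge_le_exp (t := t) hb hc.le hl hz_meas hz_indep hz_law hs hsc
  simp only [Fintype.card_fin] at chernoff
  refine ⟨fun htn => ?_, ?_⟩
  · -- `s = tb²/(4nc²)` minimises `-st + 2n (sc/b)²`
    convert chernoff (t * b ^ 2 / (4 * n * c ^ 2)) (by positivity) ?_ using 3
    · rcases eq_or_ne (n : ℝ) 0 with hn | hn
      · simp [hn]
      · field_simp
        ring
    · have htb : t * b ≤ n * c := (le_div_iff₀ hb).mp htn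
      rw [show 2 * (t * b ^ 2 / (4 * n * c ^ 2)) * c = 2 * t * b ^ 2 * c / (4 * n * c ^ 2) by ring]
      refine div_le_of_le_mul₀ (by positivity) hb.le ?_
      nlinarith [mul_le_mul_of_nonneg_left htb (by positivity : (0 : ℝ) ≤ 2 * b * c),
        (by positivity : (0 : ℝ) ≤ b * n * c ^ 2)]
  · convert chernoff (b / (2 * c)) (by positivity) (by field_simp; exact le_rfl) using 3
    field_simp
    ring

/-- **Concentration of weighted sums of Laplace random variables** (Lemma 5):
if `z₁, …, zₙ` are independent `Lap(1/b)` random variables and `|lᵢ| ≤ c`, then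
`x̄ = Σᵢ lᵢ zᵢ` satisfies `P[x̄ ≥ t] ≤ exp(−t²b²/(8nc²))` whenever `0 ≤ t ≤ nc/b`,
and `P[x̄ ≥ t] ≤ exp(n/2 − bt/(2c))` for every `t ≥ 0`. -/
theorem laplace_weighted_sum_concentration
    {Ω : Type*} [MeasurableSpace Ω] (μ : Measure Ω) [IsProbabilityMeasure μ]
    (b c : ℝ) (hb : 0 < b) (hc : 0 < c)
    (n : ℕ) (hn : 1 ≤ n)
    (l : Fin n → ℝ) (hl : ∀ i, |l i| ≤ c)
    (z : Fin n → Ω → ℝ)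
    (hz_meas : ∀ i, Measurable (z i))
    (hz_indep : iIndepFun z μ)
    (hz_law : ∀ i, Measure.map (z i) μ = laplaceMeasure b)
    (t : ℝ) (ht : 0 ≤ t) :
    (t ≤ n * c / b →
        μ {ω | t ≤ ∑ i, l i * z i ω} ≤
          ENNReal.ofReal (Real.exp (-(t ^ 2 * b ^ 2) / (8 * n * c ^ 2)))) ∧
      μ {ω | t ≤ ∑ i, l i * z i ω} ≤
        ENNReal.ofReal (Real.exp (n / 2 - b * t / (2 * c))) :=
  laplace_weighted_sum_concentration_general μ b c hb hc n l hl z hz_meas hz_indep hz_law t ht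
end

section
/- Let α and β be measurable spaces, let μ and ν be finite measures on α, and let ε ≥ 0 and δ ≥ 0 be such that μ(S) ≤ exp(ε)·ν(S) + δ for every measurable set S ⊆ α. Let κ be a Markov kernel from α to β. Then the pushed-forward measures satisfy (μ.bind κ)(B) ≤ exp(ε)·(ν.bind κ)(B) + δ for every measurable set B ⊆ β. -/
open MeasureTheory ProbabilityTheory Set
open scoped ENNReal

/-! By the layer-cake formula, integrating a `[0, 1]`-valued function against `μ` averages the
measures `μ {t < f}` of its superlevel sets over `t ∈ (0, 1)`. The hypothesis bounds each of
these by `e^ε ν {t < f} + δ`, and averaging over a unit interval keeps `δ` unchanged. Applied to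
`f = fun a => κ a B`, this is the claim, since `(μ.bind κ) B = ∫⁻ a, κ a B ∂μ`. -/

section

variable {α : Type*} [MeasurableSpace α]

theorem lintegral_ofReal_eq_setLIntegral_Ioo_meas_lt (μ : Measure α) {f : α → ℝ}
    (hf : Measurable f) (hf0 : ∀ a, 0 ≤ f a) (hf1 : ∀ a, f a ≤ 1) :
    ∫⁻ a, ENNReal.ofReal (f a) ∂μ = ∫⁻ t in Ioo 0 1, μ {a | t < f a} := by
  rw [lintegral_eq_lintegral_meas_lt μ (.of_forall hf0) hf.aemeasurable,
    ← Ioo_union_Ici_eq_Ioi zero_lt_one, lintegral_union measurableSet_Ici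
      ((Iio_disjoint_Ici le_rfl).mono_left Ioo_subset_Iio_self)]
  have : ∀ t ∈ Ici (1 : ℝ), μ {a | t < f a} = 0 := fun t (ht : 1 ≤ t) => by
    simp [fun a => not_lt.2 ((hf1 a).trans ht)]
  rw [setLIntegral_congr_fun measurableSet_Ici this, lintegral_zero, add_zero]

theorem lintegral_le_mul_lintegral_add_of_forall_measure_le {μ ν : Measure α} {c d : ℝ≥0∞}
    (h : ∀ S, MeasurableSet S → μ S ≤ c * ν S + d) {f : α → ℝ≥0∞} (hf : Measurable f)
    (hf1 : ∀ a, f a ≤ 1) :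
    ∫⁻ a, f a ∂μ ≤ c * (∫⁻ a, f a ∂ν) + d := by
  set g : α → ℝ := fun a => (f a).toReal
  have hfg : ∀ a, f a = ENNReal.ofReal (g a) := fun a =>
    (ENNReal.ofReal_toReal (ne_top_of_le_ne_top ENNReal.one_ne_top (hf1 a))).symm
  have hg : Measurable g := hf.ennreal_toReal
  have hg1 : ∀ a, g a ≤ 1 := fun a =>
    ENNReal.toReal_le_of_le_ofReal zero_le_one (by simpa using hf1 a)
  have hν : Measurable fun t => ν {a | t < g a} :=
    Antitone.measurable fun s t hst => measure_mono fun a (ha : t < g a) => hst.trans_lt ha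
  simp only [hfg]
  rw [lintegral_ofReal_eq_setLIntegral_Ioo_meas_lt μ hg (fun _ => ENNReal.toReal_nonneg) hg1,
    lintegral_ofReal_eq_setLIntegral_Ioo_meas_lt ν hg (fun _ => ENNReal.toReal_nonneg) hg1]
  calc ∫⁻ t in Ioo 0 1, μ {a | t < g a}
      ≤ ∫⁻ t in Ioo 0 1, (c * ν {a | t < g a} + d) :=
        lintegral_mono fun t => h _ (measurableSet_lt measurable_const hg)
    _ = c * (∫⁻ t in Ioo 0 1, ν {a | t < g a}) + d := by
        rw [lintegral_add_right _ measurable_const, lintegral_const_mul _ hν, setLIntegral_const,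
          Real.volume_Ioo, sub_zero, ENNReal.ofReal_one, mul_one]

end

theorem dp_post_processing_general
    {α β : Type*} [MeasurableSpace α] [MeasurableSpace β]
    (μ ν : Measure α)
    (ε δ : ℝ)
    (hdp : ∀ S : Set α, MeasurableSet S →
      μ S ≤ ENNReal.ofReal (Real.exp ε) * ν S + ENNReal.ofReal δ)
    (κ : Kernel α β) [IsMarkovKernel κ] :
    ∀ B : Set β, MeasurableSet B →
      (μ.bind κ) B ≤ ENNReal.ofReal (Real.exp ε) * (ν.bind κ) B + ENNReal.ofReal δ := by
  intro B hB
  rw [Measure.bind_apply hB κ.aemeasurable, Measure.bind_apply hB κ.aemeasurable]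
  exact lintegral_le_mul_lintegral_add_of_forall_measure_le hdp (κ.measurable_coe hB)
    fun a => prob_le_one

/-- **Post-processing preserves (ε,δ)-differential privacy**: if finite measures `μ, ν`
satisfy `μ(S) ≤ e^ε ν(S) + δ` for every measurable `S`, and `κ` is a Markov kernel,
then the pushed-forward measures satisfy the same inequality. -/
theorem dp_post_processing
    {α β : Type*} [MeasurableSpace α] [MeasurableSpace β]
    (μ ν : Measure α) [IsFiniteMeasure μ] [IsFiniteMeasure ν]
    (ε δ : ℝ) (hε : 0 ≤ ε) (hδ : 0 ≤ δ)
    (hdp : ∀ S : Set α, MeasurableSet S →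
      μ S ≤ ENNReal.ofReal (Real.exp ε) * ν S + ENNReal.ofReal δ)
    (κ : Kernel α β) [IsMarkovKernel κ] :
    ∀ B : Set β, MeasurableSet B →
      (μ.bind κ) B ≤ ENNReal.ofReal (Real.exp ε) * (ν.bind κ) B + ENNReal.ofReal δ :=
  dp_post_processing_general μ ν ε δ hdp κ
end

section
/- There exists a universal constant C > 0 (one may take C = 18) such that for every integer n ≥ 1, every δ ∈ (0,1), and every ε₀ ∈ (0,1], the function f_{n,δ}(ε₀) = ln( 1 + ((e^{ε₀} − 1)/(e^{ε₀} + 1)) · ( 8·√(e^{ε₀}·ln(4/δ))/√n + 8·e^{ε₀}/n ) ) satisfies f_{n,δ}(ε₀) ≤ C·ε₀·√(ln(4/δ)/n). -/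
set_option maxHeartbeats 1000000


/-- **High-privacy bound on the amplification-by-shuffling function**: there is a
universal constant `C > 0` (one may take `C = 18`) such that for every `n ≥ 1`,
`δ ∈ (0,1)` and `ε₀ ∈ (0,1]`,
`f_{n,δ}(ε₀) = ln(1 + ((e^{ε₀}−1)/(e^{ε₀}+1)) · (8√(e^{ε₀} ln(4/δ))/√n + 8 e^{ε₀}/n))`
satisfies `f_{n,δ}(ε₀) ≤ C·ε₀·√(ln(4/δ)/n)`. -/
theorem shuffling_amplification_bound :
    ∃ C : ℝ, 0 < C ∧
      ∀ (n : ℕ), 1 ≤ n → ∀ δ ∈ Set.Ioo (0 : ℝ) 1, ∀ ε₀ ∈ Set.Ioc (0 : ℝ) 1,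
        Real.log (1 + ((Real.exp ε₀ - 1) / (Real.exp ε₀ + 1)) *
            (8 * Real.sqrt (Real.exp ε₀ * Real.log (4 / δ)) / Real.sqrt n +
              8 * Real.exp ε₀ / n)) ≤
          C * ε₀ * Real.sqrt (Real.log (4 / δ) / n) := by
  refine ⟨50, by norm_num, ?_⟩
  intro n hn δ hδ ε₀ hε
  obtain ⟨hδ0, hδ1⟩ := hδ
  obtain ⟨hε0, hε1⟩ := hε
  set E := Real.exp ε₀ with hEdef
  set L := Real.log (4 / δ) with hLdef
  have hn1 : (1:ℝ) ≤ (n:ℝ) := by exact_mod_cast hn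
  have hn0 : (0:ℝ) < (n:ℝ) := by linarith
  have hE1 : 1 ≤ E := Real.one_le_exp hε0.le
  have hEe : E ≤ 2.7182818286 := by
    calc E ≤ Real.exp 1 := Real.exp_le_exp.mpr hε1
    _ ≤ 2.7182818286 := Real.exp_one_lt_d9.le
  have hL1 : (1:ℝ) ≤ L := by
    rw [hLdef]
    rw [Real.le_log_iff_exp_le (by positivity)]
    have h4 : (4:ℝ) ≤ 4 / δ := by
      rw [le_div_iff₀ hδ0]; nlinarith
    calc Real.exp 1 ≤ 2.7182818286 := Real.exp_one_lt_d9.le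
    _ ≤ 4 := by norm_num
    _ ≤ 4 / δ := h4
  have hL0 : (0:ℝ) ≤ L := by linarith
  set Q := Real.sqrt (L / n) with hQdef
  have hQ0 : 0 ≤ Q := Real.sqrt_nonneg _
  -- 1/n ≤ Q
  have hQn : 1 / (n:ℝ) ≤ Q := by
    have h1 : ((1:ℝ)/n)^2 ≤ 1/n := by
      rw [div_pow, one_pow]
      gcongr
      nlinarith
    have h2 : Real.sqrt (((1:ℝ)/n)^2) ≤ Real.sqrt (1/n) := Real.sqrt_le_sqrt h1
    rw [Real.sqrt_sq (by positivity)] at h2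
    have h3 : Real.sqrt ((1:ℝ)/n) ≤ Q := by
      apply Real.sqrt_le_sqrt
      gcongr
    linarith
  -- √E ≤ 1.65
  have hsE : Real.sqrt E ≤ 1.65 := by
    have h := Real.sqrt_le_sqrt (show E ≤ (1.65:ℝ)^2 by nlinarith)
    rwa [Real.sqrt_sq (by norm_num)] at h
  -- √(E*L) = √E * √L
  have hmul : Real.sqrt (E * L) = Real.sqrt E * Real.sqrt L :=
    Real.sqrt_mul (by linarith) L
  have hdiv : Real.sqrt L / Real.sqrt n = Q := (Real.sqrt_div hL0 n).symm
  have hsL0 : 0 ≤ Real.sqrt L := Real.sqrt_nonneg _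
  have hsn1 : 1 ≤ Real.sqrt (n:ℝ) := by
    rw [show (1:ℝ) = Real.sqrt 1 from (Real.sqrt_one).symm]
    exact Real.sqrt_le_sqrt hn1
  have hsn0 : 0 < Real.sqrt (n:ℝ) := by linarith
  -- bound on S
  set S := 8 * Real.sqrt (E * L) / Real.sqrt n + 8 * E / n with hSdef
  have hS1 : 8 * Real.sqrt (E * L) / Real.sqrt n ≤ 13.2 * Q := by
    rw [hmul]
    have hQL : Real.sqrt E * Real.sqrt L / Real.sqrt n ≤ 1.65 * Q := by
      rw [← hdiv, ← mul_div_assoc]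
      gcongr
    calc 8 * (Real.sqrt E * Real.sqrt L) / Real.sqrt n
        = 8 * (Real.sqrt E * Real.sqrt L / Real.sqrt n) := by ring
      _ ≤ 8 * (1.65 * Q) := by linarith
      _ = 13.2 * Q := by ring
  have hS2 : 8 * E / n ≤ 22 * Q := by
    have : 8 * E / n ≤ 22 / n := by
      gcongr
      linarith
    calc 8 * E / n ≤ 22 / n := this
      _ = 22 * (1/n) := by ring
      _ ≤ 22 * Q := by linarith
  have hS0 : 0 ≤ S := by
    rw [hSdef]
    have : 0 ≤ Real.sqrt (E * L) := Real.sqrt_nonneg _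
    positivity
  have hSQ : S ≤ 35.2 * Q := by rw [hSdef]; linarith
  -- bound on r
  set r := (E - 1) / (E + 1) with hrdef
  have hEm1 : E - 1 ≤ 2.7182818286 * ε₀ := by
    have h1 : 1 - ε₀ ≤ Real.exp (-ε₀) := by
      have := Real.add_one_le_exp (-ε₀); linarith
    have h2 : E * Real.exp (-ε₀) = 1 := by
      rw [hEdef, ← Real.exp_add]; simp
    nlinarith [Real.exp_pos (-ε₀)]
  have hr0 : 0 ≤ r := by
    apply div_nonneg <;> linarith
  have hr : r ≤ 1.36 * ε₀ := by
    rw [hrdef, div_le_iff₀ (by linarith)]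
    nlinarith
  -- conclusion
  have hrS : 0 ≤ r * S := mul_nonneg hr0 hS0
  have hlog : Real.log (1 + r * S) ≤ r * S := by
    have := Real.log_le_sub_one_of_pos (show (0:ℝ) < 1 + r * S by linarith)
    linarith
  have hfin : r * S ≤ 50 * ε₀ * Q := by
    have h1 : r * S ≤ (1.36 * ε₀) * (35.2 * Q) :=
      mul_le_mul hr hSQ hS0 (by positivity)
    have h2 : (1.36 * ε₀) * (35.2 * Q) ≤ 50 * ε₀ * Q := by
      have hεQ : 0 ≤ ε₀ * Q := mul_nonneg hε0.le hQ0
      calc (1.36 * ε₀) * (35.2 * Q) = 47.872 * (ε₀ * Q) := by ring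
        _ ≤ 50 * (ε₀ * Q) := by linarith
        _ = 50 * ε₀ * Q := by ring
    exact le_trans h1 h2
  calc Real.log (1 + r * S) ≤ r * S := hlog
    _ ≤ 50 * ε₀ * Q := hfin
end
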